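/- For every (m,n) ∈ ℤ², the monomial x₁^m x₂^n lies in the F-subspace span_F{ x₁^{w₁}x₂^{w₂} : (w₁,w₂) ∈ B } + D₁(R) + D₂(R) of R. -/

import Mathlib

/-- The Laurent polynomial ring `F[x₁^{±1}, x₂^{±1}]` as the monoid algebra of `ℤ²` over `F`. -/
noncomputable abbrev LaurentR (F : Type*) [Field F] := AddMonoidAlgebra F (ℤ × ℤ)

/-- The operator `D₁(h) = x₁ ∂h/∂x₁ + (a·x₁^a − c·λ·x₁^{−c}x₂^{−d})·h`. -/
noncomputable def D1 {F : Type*} [Field F] (a c d : ℕ) (lam : F)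
    (h : LaurentR F) : LaurentR F :=
  Finsupp.sum h.coeff (fun v r => AddMonoidAlgebra.single v ((v.1 : F) * r)) +
    (AddMonoidAlgebra.single ((a : ℤ), (0 : ℤ)) (a : F)
      - AddMonoidAlgebra.single (-(c : ℤ), -(d : ℤ)) ((c : F) * lam)) * h

/-- The operator `D₂(h) = x₂ ∂h/∂x₂ + (b·x₂^b − d·λ·x₁^{−c}x₂^{−d})·h`. -/
noncomputable def D2 {F : Type*} [Field F] (b c d : ℕ) (lam : F)
    (h : LaurentR F) : LaurentR F :=
  Finsupp.sum h.coeff (fun v r => AddMonoidAlgebra.single v ((v.2 : F) * r)) +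
    (AddMonoidAlgebra.single ((0 : ℤ), (b : ℤ)) (b : F)
      - AddMonoidAlgebra.single (-(c : ℤ), -(d : ℤ)) ((d : F) * lam)) * h


/-- The set `B` of exponent vectors from (1.1) of the paper. -/
def memB (a b c d : ℕ) (v : ℤ × ℤ) : Prop :=
  if 1 < c ∧ 1 < d then
    -(c : ℤ) < v.1 ∧ v.1 ≤ (a : ℤ) ∧ -(d : ℤ) < v.2 ∧ v.2 ≤ (b : ℤ) ∧
      ((d : ℤ) - 1) * (v.1 - (a : ℤ)) ≤ ((c : ℤ) - 1) * v.2 ∧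
      ((c : ℤ) - 1) * v.2 < ((d : ℤ) - 1) * v.1 + ((c : ℤ) - 1) * (b : ℤ)
  else if c = 1 ∧ 1 < d then
    0 ≤ v.1 ∧ v.1 ≤ (a : ℤ) ∧ -(d : ℤ) < v.2 ∧ v.2 ≤ (b : ℤ) ∧
      ¬ (v.1 = (a : ℤ) ∧ 1 - (d : ℤ) ≤ v.2 ∧ v.2 ≤ 0)
  else if 1 < c ∧ d = 1 then
    -(c : ℤ) < v.1 ∧ v.1 ≤ (a : ℤ) ∧ 0 ≤ v.2 ∧ v.2 ≤ (b : ℤ) ∧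
      ¬ (v.2 = (b : ℤ) ∧ 1 - (c : ℤ) ≤ v.1 ∧ v.1 ≤ 0)
  else
    0 ≤ v.1 ∧ v.1 ≤ (a : ℤ) ∧ 0 ≤ v.2 ∧ v.2 ≤ (b : ℤ) ∧ v ≠ ((0 : ℤ), (b : ℤ))

/-!
Let `T = span_F B + D₁(R) + D₂(R)`. Applied to a monomial `x^v`, the operators `D₁`, `D₂` and the
`λ`-free combination `d D₁ - c D₂` give three-term relations
* `D₁ x^v = v₁ x^v + a x^{v+(a,0)} - cλ x^{v-(c,d)}`,
* `D₂ x^v = v₂ x^v + b x^{v+(0,b)} - dλ x^{v-(c,d)}`,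
* `(d D₁ - c D₂) x^v = (d v₁ - c v₂) x^v + da x^{v+(a,0)} - cb x^{v+(0,b)}`,

whose last two coefficients are units since `p ∤ abcd` and `λ ≠ 0`. Hence if `x^v ∈ T` and one of
the other two monomials lies in `T`, so does the third. These rules reach all of `ℤ²` from `B`:
points left of or below the box `(-c, a] × (-d, b]` are reduced towards it by steps of `(c, d)`,
points to its right or above it by steps of `-(a, 0)` or `-(0, b)`, and the two corners of the box
cut off from `B` by the lines bounding it are reached by the `λ`-free relation, whose other two
monomials lie in `B` or in the same corner.
-/

open AddMonoidAlgebra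

namespace AddMonoidAlgebra

variable {R G : Type*} [CommSemiring R]

noncomputable def scaleCoeffs (w : G → R) : R[G] →ₗ[R] R[G] where
  toFun h := h.coeff.sum fun v r => single v (w v * r)
  map_add' h h' := by
    rw [coeff_add, Finsupp.sum_add_index' (fun _ => by simp) fun _ _ _ => by
      rw [mul_add, single_add]]
  map_smul' r h := by
    rw [coeff_smul, Finsupp.sum_smul_index (fun _ => by simp), RingHom.id_apply, Finsupp.smul_sum]
    exact Finsupp.sum_congr fun v _ => by rw [smul_single', mul_left_comm]

theorem scaleCoeffs_single (w : G → R) (v : G) (r : R) :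
    scaleCoeffs w (single v r) = single v (w v * r) := by
  simp [scaleCoeffs]

end AddMonoidAlgebra

section Operators

variable {F : Type*} [Field F]

noncomputable def D1Linear (a c d : ℕ) (lam : F) : LaurentR F →ₗ[F] LaurentR F :=
  scaleCoeffs (fun v => (v.1 : F)) + LinearMap.mulLeft F
    (single ((a : ℤ), (0 : ℤ)) (a : F) - single (-(c : ℤ), -(d : ℤ)) ((c : F) * lam))

noncomputable def D2Linear (b c d : ℕ) (lam : F) : LaurentR F →ₗ[F] LaurentR F :=
  scaleCoeffs (fun v => (v.2 : F)) + LinearMap.mulLeft F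
    (single ((0 : ℤ), (b : ℤ)) (b : F) - single (-(c : ℤ), -(d : ℤ)) ((d : F) * lam))

theorem D1Linear_apply (a c d : ℕ) (lam : F) (h : LaurentR F) :
    D1Linear a c d lam h = D1 a c d lam h :=
  rfl

theorem D2Linear_apply (b c d : ℕ) (lam : F) (h : LaurentR F) :
    D2Linear b c d lam h = D2 b c d lam h :=
  rfl

theorem D1_single (a c d : ℕ) (lam : F) (x y : ℤ) :
    D1 a c d lam (single (x, y) 1) = (x : F) • single (x, y) 1 + (a : F) • single (x + a, y) 1
      - ((c : F) * lam) • single (x - c, y - d) 1 := by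
  simp only [← D1Linear_apply, D1Linear, LinearMap.add_apply, LinearMap.mulLeft_apply,
    scaleCoeffs_single, sub_mul, single_mul_single, smul_single', Prod.mk_add_mk, mul_one,
    add_comm (a : ℤ), zero_add, neg_add_eq_sub, add_sub_assoc]

theorem D2_single (b c d : ℕ) (lam : F) (x y : ℤ) :
    D2 b c d lam (single (x, y) 1) = (y : F) • single (x, y) 1 + (b : F) • single (x, y + b) 1
      - ((d : F) * lam) • single (x - c, y - d) 1 := by
  simp only [← D2Linear_apply, D2Linear, LinearMap.add_apply, LinearMap.mulLeft_apply,
    scaleCoeffs_single, sub_mul, single_mul_single, smul_single', Prod.mk_add_mk, mul_one,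
    add_comm (b : ℤ), zero_add, neg_add_eq_sub, add_sub_assoc]

variable (a b c d : ℕ) (lam : F)

noncomputable def reductionSubmodule : Submodule F (LaurentR F) :=
  Submodule.span F {x : LaurentR F | ∃ w : ℤ × ℤ, memB a b c d w ∧ x = single w (1 : F)}
    ⊔ LinearMap.range (D1Linear a c d lam) ⊔ LinearMap.range (D2Linear b c d lam)

def reducibleExponents : Set (ℤ × ℤ) :=
  {v | single v (1 : F) ∈ reductionSubmodule a b c d lam}

theorem D1_mem_reductionSubmodule (h : LaurentR F) :
    D1 a c d lam h ∈ reductionSubmodule a b c d lam :=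
  Submodule.mem_sup_left (Submodule.mem_sup_right ⟨h, rfl⟩)

theorem D2_mem_reductionSubmodule (h : LaurentR F) :
    D2 b c d lam h ∈ reductionSubmodule a b c d lam :=
  Submodule.mem_sup_right ⟨h, rfl⟩

theorem smul_D1_sub_smul_D2_single (x y : ℤ) :
    (d : F) • D1 a c d lam (single (x, y) 1) - (c : F) • D2 b c d lam (single (x, y) 1) =
      ((d : F) * x - c * y) • single (x, y) 1 + ((d : F) * a) • single (x + a, y) 1
        - ((c : F) * b) • single (x, y + b) 1 := by
  rw [D1_single, D2_single]
  module

structure IsReductionClosed (S : Set (ℤ × ℤ)) : Prop where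
  of_memB {v : ℤ × ℤ} : memB a b c d v → v ∈ S
  up_of_D2 {x y : ℤ} : (x, y - b) ∈ S → (x - c, y - b - d) ∈ S → (x, y) ∈ S
  up_of_comb {x y : ℤ} : (x, y - b) ∈ S → (x + a, y - b) ∈ S → (x, y) ∈ S
  right_of_comb {x y : ℤ} : (x - a, y) ∈ S → (x - a, y + b) ∈ S → (x, y) ∈ S
  down_of_D1 {x y : ℤ} : (x + c, y + d) ∈ S → (x + c + a, y + d) ∈ S → (x, y) ∈ S
  down_of_D2 {x y : ℤ} : (x + c, y + d) ∈ S → (x + c, y + d + b) ∈ S → (x, y) ∈ S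

variable {a b c d lam}

theorem mem_reducibleExponents {v : ℤ × ℤ} :
    v ∈ reducibleExponents a b c d lam ↔ single v (1 : F) ∈ reductionSubmodule a b c d lam :=
  Iff.rfl

namespace reducibleExponents

theorem up_of_D2 (hb : (b : F) ≠ 0) {x y : ℤ} (h₁ : (x, y - b) ∈ reducibleExponents a b c d lam)
    (h₂ : (x - c, y - b - d) ∈ reducibleExponents a b c d lam) :
    (x, y) ∈ reducibleExponents a b c d lam := by
  have key : (b : F) • single (x, y) 1 = D2 b c d lam (single (x, y - b) 1)
      - ((y - b : ℤ) : F) • single (x, y - b) 1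
      + ((d : F) * lam) • single (x - c, y - b - d) 1 := by
    rw [D2_single, sub_add_cancel]; module
  rw [mem_reducibleExponents, ← Submodule.smul_mem_iff _ hb, key]
  exact add_mem (sub_mem (D2_mem_reductionSubmodule a b c d lam _) (Submodule.smul_mem _ _ h₁))
    (Submodule.smul_mem _ _ h₂)

theorem up_of_comb (hc : (c : F) ≠ 0) (hb : (b : F) ≠ 0) {x y : ℤ}
    (h₁ : (x, y - b) ∈ reducibleExponents a b c d lam)
    (h₂ : (x + a, y - b) ∈ reducibleExponents a b c d lam) :
    (x, y) ∈ reducibleExponents a b c d lam := by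
  have key : ((c : F) * b) • single (x, y) 1 =
      (c : F) • D2 b c d lam (single (x, y - b) 1) - (d : F) • D1 a c d lam (single (x, y - b) 1)
        + ((d : F) * x - c * (y - b : ℤ)) • single (x, y - b) 1
        + ((d : F) * a) • single (x + a, y - b) 1 := by
    rw [← neg_sub, smul_D1_sub_smul_D2_single, sub_add_cancel]; module
  rw [mem_reducibleExponents, ← Submodule.smul_mem_iff _ (mul_ne_zero hc hb), key]
  exact add_mem (add_mem (sub_mem (Submodule.smul_mem _ _ (D2_mem_reductionSubmodule a b c d lam _))
    (Submodule.smul_mem _ _ (D1_mem_reductionSubmodule a b c d lam _))) (Submodule.smul_mem _ _ h₁))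
    (Submodule.smul_mem _ _ h₂)

theorem right_of_comb (hd : (d : F) ≠ 0) (ha : (a : F) ≠ 0) {x y : ℤ}
    (h₁ : (x - a, y) ∈ reducibleExponents a b c d lam)
    (h₂ : (x - a, y + b) ∈ reducibleExponents a b c d lam) :
    (x, y) ∈ reducibleExponents a b c d lam := by
  have key : ((d : F) * a) • single (x, y) 1 =
      (d : F) • D1 a c d lam (single (x - a, y) 1) - (c : F) • D2 b c d lam (single (x - a, y) 1)
        - ((d : F) * (x - a : ℤ) - c * y) • single (x - a, y) 1
        + ((c : F) * b) • single (x - a, y + b) 1 := by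
    rw [smul_D1_sub_smul_D2_single, sub_add_cancel]; module
  rw [mem_reducibleExponents, ← Submodule.smul_mem_iff _ (mul_ne_zero hd ha), key]
  exact add_mem (sub_mem (sub_mem (Submodule.smul_mem _ _ (D1_mem_reductionSubmodule a b c d lam _))
    (Submodule.smul_mem _ _ (D2_mem_reductionSubmodule a b c d lam _))) (Submodule.smul_mem _ _ h₁))
    (Submodule.smul_mem _ _ h₂)

theorem down_of_D1 (hc : (c : F) ≠ 0) (hlam : lam ≠ 0) {x y : ℤ}
    (h₁ : (x + c, y + d) ∈ reducibleExponents a b c d lam)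
    (h₂ : (x + c + a, y + d) ∈ reducibleExponents a b c d lam) :
    (x, y) ∈ reducibleExponents a b c d lam := by
  have key : ((c : F) * lam) • single (x, y) 1 = ((x + c : ℤ) : F) • single (x + c, y + d) 1
      + (a : F) • single (x + c + a, y + d) 1 - D1 a c d lam (single (x + c, y + d) 1) := by
    rw [D1_single, add_sub_cancel_right, add_sub_cancel_right]; module
  rw [mem_reducibleExponents, ← Submodule.smul_mem_iff _ (mul_ne_zero hc hlam), key]
  exact sub_mem (add_mem (Submodule.smul_mem _ _ h₁) (Submodule.smul_mem _ _ h₂))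
    (D1_mem_reductionSubmodule a b c d lam _)

theorem down_of_D2 (hd : (d : F) ≠ 0) (hlam : lam ≠ 0) {x y : ℤ}
    (h₁ : (x + c, y + d) ∈ reducibleExponents a b c d lam)
    (h₂ : (x + c, y + d + b) ∈ reducibleExponents a b c d lam) :
    (x, y) ∈ reducibleExponents a b c d lam := by
  have key : ((d : F) * lam) • single (x, y) 1 = ((y + d : ℤ) : F) • single (x + c, y + d) 1
      + (b : F) • single (x + c, y + d + b) 1 - D2 b c d lam (single (x + c, y + d) 1) := by
    rw [D2_single, add_sub_cancel_right, add_sub_cancel_right]; module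
  rw [mem_reducibleExponents, ← Submodule.smul_mem_iff _ (mul_ne_zero hd hlam), key]
  exact sub_mem (add_mem (Submodule.smul_mem _ _ h₁) (Submodule.smul_mem _ _ h₂))
    (D2_mem_reductionSubmodule a b c d lam _)

theorem isReductionClosed (ha : (a : F) ≠ 0) (hb : (b : F) ≠ 0) (hc : (c : F) ≠ 0)
    (hd : (d : F) ≠ 0) (hlam : lam ≠ 0) :
    IsReductionClosed a b c d (reducibleExponents a b c d lam) where
  of_memB hv :=
    Submodule.mem_sup_left (Submodule.mem_sup_left (Submodule.subset_span ⟨_, hv, rfl⟩))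
  up_of_D2 := up_of_D2 hb
  up_of_comb := up_of_comb hc hb
  right_of_comb := right_of_comb hd ha
  down_of_D1 := down_of_D1 hc hlam
  down_of_D2 := down_of_D2 hd hlam

end reducibleExponents

end Operators

section memB

variable {a b c d : ℕ} {v : ℤ × ℤ}

theorem memB_iff_of_one_lt_of_one_lt (hc : 1 < c) (hd : 1 < d) :
    memB a b c d v ↔ -(c : ℤ) < v.1 ∧ v.1 ≤ (a : ℤ) ∧ -(d : ℤ) < v.2 ∧ v.2 ≤ (b : ℤ) ∧
      ((d : ℤ) - 1) * (v.1 - (a : ℤ)) ≤ ((c : ℤ) - 1) * v.2 ∧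
      ((c : ℤ) - 1) * v.2 < ((d : ℤ) - 1) * v.1 + ((c : ℤ) - 1) * (b : ℤ) := by
  rw [memB, if_pos ⟨hc, hd⟩]

theorem memB_one_d_iff (hd : 1 < d) :
    memB a b 1 d v ↔ 0 ≤ v.1 ∧ v.1 ≤ (a : ℤ) ∧ -(d : ℤ) < v.2 ∧ v.2 ≤ (b : ℤ) ∧
      ¬ (v.1 = (a : ℤ) ∧ 1 - (d : ℤ) ≤ v.2 ∧ v.2 ≤ 0) := by
  rw [memB, if_neg (by omega), if_pos ⟨rfl, hd⟩]

theorem memB_c_one_iff (hc : 1 < c) :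
    memB a b c 1 v ↔ -(c : ℤ) < v.1 ∧ v.1 ≤ (a : ℤ) ∧ 0 ≤ v.2 ∧ v.2 ≤ (b : ℤ) ∧
      ¬ (v.2 = (b : ℤ) ∧ 1 - (c : ℤ) ≤ v.1 ∧ v.1 ≤ 0) := by
  rw [memB, if_neg (by omega), if_neg (by omega), if_pos ⟨hc, rfl⟩]

theorem memB_one_one_iff :
    memB a b 1 1 v ↔ 0 ≤ v.1 ∧ v.1 ≤ (a : ℤ) ∧ 0 ≤ v.2 ∧ v.2 ≤ (b : ℤ) ∧
      ¬ (v.1 = 0 ∧ v.2 = (b : ℤ)) := by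
  rw [memB, if_neg (by omega), if_neg (by omega), if_neg (by omega), Ne, Prod.ext_iff]

end memB

namespace IsReductionClosed

variable {a b c d : ℕ} {S : Set (ℤ × ℤ)}

theorem mem_of_high (hS : IsReductionClosed a b c d S) (hb : 0 < b) (hc : 1 < c) (hd : 1 < d)
    {x y : ℤ} (hx : -(c : ℤ) < x) (hxa : x ≤ a) (hyb : y ≤ b)
    (hhigh : ((d : ℤ) - 1) * x + ((c : ℤ) - 1) * b ≤ ((c : ℤ) - 1) * y) : (x, y) ∈ S := by
  have hdx : ((d : ℤ) - 1) * x ≤ ((c : ℤ) - 1) * (y - b) := by linarith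
  have hx0 : x ≤ 0 := by nlinarith
  have hyb' : 1 - (d : ℤ) ≤ y - b := by nlinarith
  have below (x' : ℤ) (hx' : -(c : ℤ) < x') (hxa' : x' ≤ a)
      (hlow : ((d : ℤ) - 1) * (x' - a) ≤ ((c : ℤ) - 1) * (y - b)) : (x', y - b) ∈ S := by
    by_cases hup : ((c : ℤ) - 1) * (y - b) < ((d : ℤ) - 1) * x' + ((c : ℤ) - 1) * b
    · exact hS.of_memB ((memB_iff_of_one_lt_of_one_lt hc hd).2
        ⟨hx', hxa', by omega, by omega, hlow, hup⟩)
    · exact hS.mem_of_high hb hc hd hx' hxa' (by omega) (not_lt.1 hup)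
  exact hS.up_of_comb (below x hx hxa (by nlinarith))
    (below (x + a) (by omega) (by omega) (by linarith))
termination_by (y + d).toNat
decreasing_by omega

theorem mem_of_low (hS : IsReductionClosed a b c d S) (ha : 0 < a) (hb : 0 < b) (hc : 1 < c)
    (hd : 1 < d) {x y : ℤ} (hxa : x ≤ a) (hy : -(d : ℤ) < y) (hyb : y ≤ b)
    (hlow : ((c : ℤ) - 1) * y < ((d : ℤ) - 1) * (x - a)) : (x, y) ∈ S := by
  have hy0 : y < 0 := by nlinarith
  have hxa' : 2 - (c : ℤ) ≤ x - a := by nlinarith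
  have left (y' : ℤ) (hy' : -(d : ℤ) < y') (hyb' : y' ≤ b)
      (hup : ((c : ℤ) - 1) * y' < ((d : ℤ) - 1) * (x - a) + ((c : ℤ) - 1) * b) :
      (x - a, y') ∈ S := by
    by_cases hlow' : ((d : ℤ) - 1) * (x - a - a) ≤ ((c : ℤ) - 1) * y'
    · exact hS.of_memB ((memB_iff_of_one_lt_of_one_lt hc hd).2
        ⟨by omega, by omega, hy', hyb', hlow', hup⟩)
    · exact hS.mem_of_low ha hb hc hd (by omega) hy' hyb' (not_le.1 hlow')
  exact hS.right_of_comb (left y hy hyb (by nlinarith))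
    (left (y + b) (by omega) (by omega) (by linarith))
termination_by (x + c).toNat
decreasing_by omega

theorem mem_of_box (hS : IsReductionClosed a b c d S) (ha : 0 < a) (hb : 0 < b) (hc : 0 < c)
    (hd : 0 < d) {x y : ℤ} (hx : -(c : ℤ) < x) (hxa : x ≤ a) (hy : -(d : ℤ) < y) (hyb : y ≤ b) :
    (x, y) ∈ S := by
  obtain rfl | hc := (by omega : c = 1 ∨ 1 < c) <;> obtain rfl | hd := (by omega : d = 1 ∨ 1 < d)
  · by_cases hcorner : x = 0 ∧ y = b
    · exact hS.up_of_comb (hS.of_memB (memB_one_one_iff.2 (by omega)))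
        (hS.of_memB (memB_one_one_iff.2 (by omega)))
    · exact hS.of_memB (memB_one_one_iff.2 (by omega))
  · by_cases hedge : x = a ∧ 1 - (d : ℤ) ≤ y ∧ y ≤ 0
    · exact hS.right_of_comb (hS.of_memB ((memB_one_d_iff hd).2 (by omega)))
        (hS.of_memB ((memB_one_d_iff hd).2 (by omega)))
    · exact hS.of_memB ((memB_one_d_iff hd).2 (by omega))
  · by_cases hedge : y = b ∧ 1 - (c : ℤ) ≤ x ∧ x ≤ 0
    · exact hS.up_of_comb (hS.of_memB ((memB_c_one_iff hc).2 (by omega)))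
        (hS.of_memB ((memB_c_one_iff hc).2 (by omega)))
    · exact hS.of_memB ((memB_c_one_iff hc).2 (by omega))
  · by_cases hlow : ((c : ℤ) - 1) * y < ((d : ℤ) - 1) * (x - a)
    · exact hS.mem_of_low ha hb hc hd hxa hy hyb hlow
    by_cases hhigh : ((d : ℤ) - 1) * x + ((c : ℤ) - 1) * b ≤ ((c : ℤ) - 1) * y
    · exact hS.mem_of_high hb hc hd hx hxa hyb hhigh
    · exact hS.of_memB ((memB_iff_of_one_lt_of_one_lt hc hd).2
        ⟨hx, hxa, hy, hyb, not_lt.1 hlow, not_le.1 hhigh⟩)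

theorem mem (hS : IsReductionClosed a b c d S) (ha : 0 < a) (hb : 0 < b) (hc : 0 < c)
    (hd : 0 < d) (x y : ℤ) : (x, y) ∈ S := by
  by_cases hx : x ≤ -(c : ℤ)
  · exact hS.down_of_D1 (hS.mem ha hb hc hd _ _) (hS.mem ha hb hc hd _ _)
  by_cases hy : y ≤ -(d : ℤ)
  · exact hS.down_of_D2 (hS.mem ha hb hc hd _ _) (hS.mem ha hb hc hd _ _)
  by_cases hxa : (a : ℤ) < x
  · exact hS.right_of_comb (hS.mem ha hb hc hd _ _) (hS.mem ha hb hc hd _ _)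
  by_cases hyb : (b : ℤ) < y
  · by_cases hx0 : 0 < x
    · exact hS.up_of_D2 (hS.mem ha hb hc hd _ _) (hS.mem ha hb hc hd _ _)
    · exact hS.up_of_comb (hS.mem ha hb hc hd _ _) (hS.mem ha hb hc hd _ _)
  exact hS.mem_of_box ha hb hc hd (by omega) (by omega) (by omega) (by omega)
-- The components vanish in turn once `x > -c`, `y > -d`, `x ≤ a`, `y ≤ b`; each recursive call
-- keeps the vanished ones at `0` and decreases the first non-vanishing one.
termination_by ((1 - c - x).toNat, (1 - d - y).toNat, (x - a).toNat, (y - b).toNat)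
decreasing_by all_goals simp_wf; simp only [Prod.lex_def, true_and]; omega

end IsReductionClosed

theorem stmt4_general {F : Type*} [Field F] (p a b c d : ℕ)
    (ha : 0 < a) (hb : 0 < b) (hc : 0 < c) (hd : 0 < d)
    [CharP F p] (hpdvd : ¬ p ∣ a * b * c * d)
    (lam : F) (hlam : lam ≠ 0) (m n : ℤ) :
    ∃ g ∈ Submodule.span F
        {x : LaurentR F | ∃ w : ℤ × ℤ, memB a b c d w ∧ x = AddMonoidAlgebra.single w (1 : F)},
      ∃ h₁ h₂ : LaurentR F,
        AddMonoidAlgebra.single ((m, n) : ℤ × ℤ) (1 : F)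
          = g + D1 a c d lam h₁ + D2 b c d lam h₂ := by
  have hcast : ((a * b * c * d : ℕ) : F) ≠ 0 := (CharP.cast_eq_zero_iff F p _).not.mpr hpdvd
  simp only [Nat.cast_mul, mul_ne_zero_iff] at hcast
  obtain ⟨⟨⟨haF, hbF⟩, hcF⟩, hdF⟩ := hcast
  have hmem : (m, n) ∈ reducibleExponents a b c d lam :=
    (reducibleExponents.isReductionClosed haF hbF hcF hdF hlam).mem ha hb hc hd m n
  obtain ⟨_, hgD1, _, ⟨h₂, rfl⟩, hsum⟩ := Submodule.mem_sup.mp hmem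
  obtain ⟨g, hg, _, ⟨h₁, rfl⟩, rfl⟩ := Submodule.mem_sup.mp hgD1
  exact ⟨g, hg, h₁, h₂, hsum.symm⟩

theorem stmt4 {F : Type*} [Field F] (p a b c d : ℕ)
    (ha : 0 < a) (hb : 0 < b) (hc : 0 < c) (hd : 0 < d)
    (hab : Nat.gcd a b = 1) (hac : Nat.gcd a c = 1)
    (hbc : Nat.gcd b c = 1) (hbd : Nat.gcd b d = 1)
    (hp : 0 < p) [CharP F p] (hpdvd : ¬ p ∣ a * b * c * d)
    (lam : F) (hlam : lam ≠ 0) (m n : ℤ) :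
    ∃ g ∈ Submodule.span F
        {x : LaurentR F | ∃ w : ℤ × ℤ, memB a b c d w ∧ x = AddMonoidAlgebra.single w (1 : F)},
      ∃ h₁ h₂ : LaurentR F,
        AddMonoidAlgebra.single ((m, n) : ℤ × ℤ) (1 : F)
          = g + D1 a c d lam h₁ + D2 b c d lam h₂ :=
  stmt4_general p a b c d ha hb hc hd hpdvd lam hlam m n
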